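/- arXiv:1604.03162 — 2 statements merged into one kernel-verified Lean document; each statement's English description precedes it below -/
import Mathlib

section
/- Let (G, {ρ_0, ρ_1, ρ_2}) be a C-group of rank 3 and let Γ = Γ(G; {G_0, G_1, G_2}) be the coset geometry with G_0 = ⟨ρ_1, ρ_2⟩, G_1 = ⟨ρ_0, ρ_2⟩, G_2 = ⟨ρ_0, ρ_1⟩. Then Γ is thin if and only if G is regular on Γ (i.e. the right-multiplication action of G is flag-transitive and only the identity fixes a chamber). Moreover, if Γ is thin (or regular), then Γ is a regular hypertope: a thin, residually connected, flag-transitive incidence geometry. -/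
open Pointwise

/-- An incidence system `(X, *, t, I)`. -/
structure IncidenceSystem (X : Type*) (I : Type*) where
  inc : X → X → Prop
  typ : X → I
  inc_refl : ∀ x, inc x x
  inc_symm : ∀ x y, inc x y → inc y x
  eq_of_inc_of_typ_eq : ∀ x y, inc x y → typ x = typ y → x = y

namespace IncidenceSystem

variable {X : Type*} {I : Type*} (Γ : IncidenceSystem X I)

/-- A flag is a set of pairwise incident elements. -/
def IsFlag (F : Set X) : Prop := ∀ x ∈ F, ∀ y ∈ F, Γ.inc x y

/-- A chamber is a flag of type `I`. -/
def IsChamber (C : Set X) : Prop := Γ.IsFlag C ∧ Γ.typ '' C = Set.univ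

/-- An incidence geometry: every flag is contained in a chamber. -/
def IsGeometry : Prop := ∀ F : Set X, Γ.IsFlag F → ∃ C : Set X, Γ.IsChamber C ∧ F ⊆ C

/-- The set of elements of the residue of a flag `F`: elements outside `F`
incident to every element of `F`. -/
def res (F : Set X) : Set X := {x : X | x ∉ F ∧ ∀ f ∈ F, Γ.inc x f}

/-- The incidence graph induced on a subset `S` is connected. -/
def ConnectedOn (S : Set X) : Prop :=
  S.Nonempty ∧ ∀ x ∈ S, ∀ y ∈ S,
    Relation.ReflTransGen (fun a b : X => a ∈ S ∧ b ∈ S ∧ a ≠ b ∧ Γ.inc a b) x y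

/-- Residual connectedness: the incidence graph of every residue of rank at
least two (including `Γ` itself, the residue of the empty flag) is connected. -/
def ResiduallyConnected : Prop :=
  ∀ F : Set X, Γ.IsFlag F →
    (∃ i j : I, i ≠ j ∧ i ∉ Γ.typ '' F ∧ j ∉ Γ.typ '' F) →
    Γ.ConnectedOn (Γ.res F)

/-- Thinness: every residue of rank one contains exactly two elements. -/
def Thin : Prop :=
  ∀ F : Set X, Γ.IsFlag F → (∃! i : I, i ∉ Γ.typ '' F) →
    ∃ x y : X, x ≠ y ∧ Γ.res F = {x, y}

/-- Firmness: every residue of rank one contains at least two elements. -/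
def Firm : Prop :=
  ∀ F : Set X, Γ.IsFlag F → (∃! i : I, i ∉ Γ.typ '' F) →
    ∃ x y : X, x ≠ y ∧ x ∈ Γ.res F ∧ y ∈ Γ.res F

/-- Two chambers are `i`-adjacent if they differ exactly in their elements of type `i`. -/
def Adjacent (C C' : Set X) (i : I) : Prop :=
  Γ.IsChamber C ∧ Γ.IsChamber C' ∧ C ≠ C' ∧
    {x ∈ C | Γ.typ x ≠ i} = {x ∈ C' | Γ.typ x ≠ i}

/-- Chamber-connectedness of the residue of the flag `F`: any two chambers
containing `F` are linked by a sequence of successively adjacent chambers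
containing `F`. -/
def ChamberConnectedFrom (F : Set X) : Prop :=
  ∀ C C' : Set X, Γ.IsChamber C → Γ.IsChamber C' → F ⊆ C → F ⊆ C' →
    Relation.ReflTransGen
      (fun A B : Set X => F ⊆ A ∧ F ⊆ B ∧ ∃ i : I, Γ.Adjacent A B i) C C'

/-- Strong chamber-connectedness: every residue of rank at least two
(including `Γ` itself) is chamber-connected. -/
def StronglyChamberConnected : Prop :=
  ∀ F : Set X, Γ.IsFlag F →
    (∃ i j : I, i ≠ j ∧ i ∉ Γ.typ '' F ∧ j ∉ Γ.typ '' F) →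
    Γ.ChamberConnectedFrom F

/-- A type-preserving automorphism. -/
def IsAut (φ : Equiv.Perm X) : Prop :=
  (∀ x, Γ.typ (φ x) = Γ.typ x) ∧ ∀ x y, (Γ.inc (φ x) (φ y) ↔ Γ.inc x y)

/-- The group `Aut_I(Γ)` of type-preserving automorphisms. -/
def autGroup : Subgroup (Equiv.Perm X) where
  carrier := {φ : Equiv.Perm X | Γ.IsAut φ}
  one_mem' := ⟨fun _ => rfl, fun _ _ => Iff.rfl⟩
  mul_mem' := by
    rintro φ ψ ⟨ht, hi⟩ ⟨ht', hi'⟩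
    exact ⟨fun x => by rw [Equiv.Perm.mul_apply, ht, ht'],
      fun x y => by rw [Equiv.Perm.mul_apply, Equiv.Perm.mul_apply, hi, hi']⟩
  inv_mem' := by
    rintro φ ⟨ht, hi⟩
    refine ⟨fun x => ?_, fun x y => ?_⟩
    · conv_rhs => rw [← (show φ (φ⁻¹ x) = x from Equiv.apply_symm_apply φ x)]
      rw [ht]
    · conv_rhs => rw [← (show φ (φ⁻¹ x) = x from Equiv.apply_symm_apply φ x), ← (show φ (φ⁻¹ y) = y from Equiv.apply_symm_apply φ y)]
      exact (hi _ _).symm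

/-- Two chambers are in the same orbit under `Aut_I(Γ)`. -/
def InSameOrbit (C C' : Set X) : Prop := ∃ φ ∈ Γ.autGroup, ⇑φ '' C = C'

/-- Flag-transitivity: `Aut_I(Γ)` is transitive on the flags of each type. -/
def FlagTransitive : Prop :=
  ∀ F F' : Set X, Γ.IsFlag F → Γ.IsFlag F' → Γ.typ '' F = Γ.typ '' F' →
    ∃ φ ∈ Γ.autGroup, ⇑φ '' F = F'

/-- Chamber-transitivity: `Aut_I(Γ)` is transitive on chambers. -/
def ChamberTransitive : Prop :=
  ∀ C C' : Set X, Γ.IsChamber C → Γ.IsChamber C' → ∃ φ ∈ Γ.autGroup, ⇑φ '' C = C'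

/-- Chirality: `Aut_I(Γ)` has exactly two orbits on chambers, and adjacent
chambers lie in distinct orbits. -/
def Chiral : Prop :=
  (∃ C₁ C₂ : Set X, Γ.IsChamber C₁ ∧ Γ.IsChamber C₂ ∧ ¬ Γ.InSameOrbit C₁ C₂ ∧
    ∀ C : Set X, Γ.IsChamber C → Γ.InSameOrbit C C₁ ∨ Γ.InSameOrbit C C₂) ∧
  ∀ (C C' : Set X) (i : I), Γ.Adjacent C C' i → ¬ Γ.InSameOrbit C C'

/-- The `J`-truncation of `Γ`. -/
def truncation (J : Set I) : IncidenceSystem {x : X // Γ.typ x ∈ J} J where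
  inc p q := Γ.inc p.1 q.1
  typ p := ⟨Γ.typ p.1, p.2⟩
  inc_refl p := Γ.inc_refl p.1
  inc_symm p q h := Γ.inc_symm _ _ h
  eq_of_inc_of_typ_eq p q h ht :=
    Subtype.ext (Γ.eq_of_inc_of_typ_eq _ _ h (congrArg Subtype.val ht))

end IncidenceSystem

section CosetGeometry

variable {G : Type*} [Group G] {ι : Type*}

/-- The right coset `H g`. -/
def rcoset (H : Subgroup G) (g : G) : Set G := {x : G | x * g⁻¹ ∈ H}

lemma mem_rcoset_self (H : Subgroup G) (g : G) : g ∈ rcoset H g := by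
  show g * g⁻¹ ∈ H
  simp only [mul_inv_cancel]
  exact H.one_mem

lemma rcoset_eq_of_mem {H : Subgroup G} {g x : G} (hx : x ∈ rcoset H g) :
    rcoset H x = rcoset H g := by
  ext y
  simp only [rcoset, Set.mem_setOf_eq] at *
  constructor
  · intro hy
    have h2 := H.mul_mem hy hx
    have h3 : y * x⁻¹ * (x * g⁻¹) = y * g⁻¹ := by group
    rwa [h3] at h2
  · intro hy
    have h2 := H.mul_mem hy (H.inv_mem hx)
    have h3 : y * g⁻¹ * (x * g⁻¹)⁻¹ = y * x⁻¹ := by group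
    rwa [h3] at h2

/-- Elements of the coset geometry `Γ(G; (G_i))`: pairs consisting of a type
`i` and a right coset of `G_i`. -/
def CosetElt (Gi : ι → Subgroup G) : Type _ :=
  { p : ι × Set G // ∃ g : G, p.2 = rcoset (Gi p.1) g }

/-- The coset incidence system `Γ(G; (G_i))` of Tits. -/
def cosetGeometry (Gi : ι → Subgroup G) : IncidenceSystem (CosetElt Gi) ι where
  inc p q := (p.1.2 ∩ q.1.2).Nonempty
  typ p := p.1.1
  inc_refl := by
    rintro ⟨⟨i, S⟩, g, hg⟩
    dsimp at hg ⊢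
    subst hg
    exact ⟨g, mem_rcoset_self _ g, mem_rcoset_self _ g⟩
  inc_symm := by
    rintro p q ⟨x, hx1, hx2⟩
    exact ⟨x, hx2, hx1⟩
  eq_of_inc_of_typ_eq := by
    rintro ⟨⟨i, S⟩, hS⟩ ⟨⟨j, T⟩, hT⟩ hinc hij
    obtain ⟨x, hx1, hx2⟩ := hinc
    dsimp at hij hx1 hx2 hS hT
    subst hij
    obtain ⟨g, rfl⟩ := hS
    obtain ⟨h, rfl⟩ := hT
    apply Subtype.ext
    dsimp only
    rw [Prod.mk.injEq]
    exact ⟨rfl, by rw [← rcoset_eq_of_mem hx1, rcoset_eq_of_mem hx2]⟩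

lemma rcoset_image_mul (H : Subgroup G) (g a : G) :
    (fun x : G => x * a) '' rcoset H g = rcoset H (g * a) := by
  ext y
  simp only [rcoset, Set.mem_image, Set.mem_setOf_eq, mul_inv_rev]
  constructor
  · rintro ⟨x, hx, rfl⟩
    have h3 : x * a * (a⁻¹ * g⁻¹) = x * g⁻¹ := by group
    rwa [h3]
  · intro hy
    refine ⟨y * a⁻¹, ?_, by group⟩
    have h3 : y * a⁻¹ * g⁻¹ = y * (a⁻¹ * g⁻¹) := by group
    rwa [h3]

/-- Right multiplication by `a` on the coset geometry. -/
def rmul (Gi : ι → Subgroup G) (a : G) (p : CosetElt Gi) : CosetElt Gi :=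
  ⟨(p.1.1, (fun x : G => x * a) '' p.1.2), by
    obtain ⟨g, hg⟩ := p.2
    exact ⟨g * a, by rw [hg, rcoset_image_mul]⟩⟩

/-- `G` acts flag-transitively on the coset geometry by right multiplication. -/
def GFlagTransitive (Gi : ι → Subgroup G) : Prop :=
  ∀ F F' : Set (CosetElt Gi), (cosetGeometry Gi).IsFlag F → (cosetGeometry Gi).IsFlag F' →
    (cosetGeometry Gi).typ '' F = (cosetGeometry Gi).typ '' F' →
    ∃ a : G, rmul Gi a '' F = F'

/-- Only the identity of `G` fixes a chamber of the coset geometry. -/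
def GFree (Gi : ι → Subgroup G) : Prop :=
  ∀ (a : G) (C : Set (CosetElt Gi)), (cosetGeometry Gi).IsChamber C →
    rmul Gi a '' C = C → a = 1

end CosetGeometry

/-- `(G, ρ)` is a C-group: the `ρ i` are involutions generating `G` and
satisfying the intersection property. -/
def IsCGroup {G : Type*} [Group G] {r : ℕ} (ρ : Fin r → G) : Prop :=
  (∀ i, ρ i ≠ 1 ∧ ρ i * ρ i = 1) ∧
  Subgroup.closure (Set.range ρ) = ⊤ ∧
  ∀ K J : Set (Fin r),
    Subgroup.closure (ρ '' K) ⊓ Subgroup.closure (ρ '' J) =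
      Subgroup.closure (ρ '' (K ∩ J))

/-- The parabolic subgroup `G⁺_K = ⟨α_i⁻¹ α_j : i, j ∈ K⟩` of a `C⁺`-group. -/
def GplusSub {G : Type*} [Group G] {r : ℕ} (α : Fin r → G) (K : Set (Fin r)) : Subgroup G :=
  Subgroup.closure {g : G | ∃ i ∈ K, ∃ j ∈ K, g = (α i)⁻¹ * α j}
section AuxBasic

variable {G : Type*} [Group G]

lemma mem_rcoset_iff {H : Subgroup G} {g x : G} : x ∈ rcoset H g ↔ x * g⁻¹ ∈ H := Iff.rfl

lemma rcoset_eq_iff {H : Subgroup G} {g h : G} : rcoset H h = rcoset H g ↔ h * g⁻¹ ∈ H :=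
  ⟨fun e => by have := mem_rcoset_self H h; rw [e] at this; exact this, rcoset_eq_of_mem⟩

variable (Gi : Fin 3 → Subgroup G)

/-- The element of the coset geometry corresponding to the coset `G_i g`. -/
def cmk (i : Fin 3) (g : G) : CosetElt Gi := ⟨(i, rcoset (Gi i) g), g, rfl⟩

@[simp] lemma typ_cmk (i : Fin 3) (g : G) : (cosetGeometry Gi).typ (cmk Gi i g) = i := rfl

variable {Gi}

lemma cmk_type_eq {i j : Fin 3} {g h : G} (e : cmk Gi i g = cmk Gi j h) : i = j :=
  congrArg (fun x : CosetElt Gi => x.1.1) e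

lemma cmk_eq_iff {i : Fin 3} {g h : G} : cmk Gi i g = cmk Gi i h ↔ h * g⁻¹ ∈ Gi i := by
  constructor
  · intro e
    have e2 : rcoset (Gi i) g = rcoset (Gi i) h := congrArg (fun x : CosetElt Gi => x.1.2) e
    exact rcoset_eq_iff.mp e2.symm
  · intro hm
    exact Subtype.ext (Prod.ext rfl (rcoset_eq_of_mem (x := h) hm).symm)

lemma exists_cmk (x : CosetElt Gi) : ∃ g, x = cmk Gi ((cosetGeometry Gi).typ x) g := by
  obtain ⟨⟨i, S⟩, g, hg⟩ := x
  exact ⟨g, Subtype.ext (Prod.ext rfl hg)⟩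

lemma exists_cmk' (x : CosetElt Gi) : ∃ i g, x = cmk Gi i g := by
  obtain ⟨⟨i, S⟩, g, hg⟩ := x
  exact ⟨i, g, Subtype.ext (Prod.ext rfl hg)⟩

lemma inc_cmk {i j : Fin 3} {a b : G} :
    (cosetGeometry Gi).inc (cmk Gi i a) (cmk Gi j b) ↔
      ∃ c, c ∈ rcoset (Gi i) a ∧ c ∈ rcoset (Gi j) b := Iff.rfl

lemma inc_of_mem {i j : Fin 3} {a b c : G} (h1 : c ∈ rcoset (Gi i) a)
    (h2 : c ∈ rcoset (Gi j) b) : (cosetGeometry Gi).inc (cmk Gi i a) (cmk Gi j b) :=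
  ⟨c, h1, h2⟩

lemma inc_cmk_same (i j : Fin 3) (g : G) :
    (cosetGeometry Gi).inc (cmk Gi i g) (cmk Gi j g) :=
  inc_of_mem (mem_rcoset_self _ g) (mem_rcoset_self _ g)

lemma cmk_base_change {i : Fin 3} {a c : G} (h : c ∈ rcoset (Gi i) a) :
    cmk Gi i a = cmk Gi i c := cmk_eq_iff.mpr h

lemma rmul_cmk (a : G) (i : Fin 3) (g : G) :
    rmul Gi a (cmk Gi i g) = cmk Gi i (g * a) :=
  Subtype.ext (Prod.ext rfl (rcoset_image_mul _ g a))

end AuxBasic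

section AuxFlag

variable {G : Type*} [Group G] (Gi : Fin 3 → Subgroup G)

/-- The standard flag of type `J` through the point `g`. -/
def bflag (J : Set (Fin 3)) (g : G) : Set (CosetElt Gi) := (fun l => cmk Gi l g) '' J

variable {Gi}

lemma mem_bflag {J : Set (Fin 3)} {g : G} {x : CosetElt Gi} :
    x ∈ bflag Gi J g ↔ ∃ l ∈ J, x = cmk Gi l g := by
  simp only [bflag, Set.mem_image, eq_comm]

lemma cmk_mem_bflag {J : Set (Fin 3)} {g : G} {l : Fin 3} (hl : l ∈ J) :
    cmk Gi l g ∈ bflag Gi J g := ⟨l, hl, rfl⟩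

lemma bflag_isFlag (J : Set (Fin 3)) (g : G) :
    (cosetGeometry Gi).IsFlag (bflag Gi J g) := by
  rintro x hx y hy
  obtain ⟨l, _, rfl⟩ := mem_bflag.mp hx
  obtain ⟨m, _, rfl⟩ := mem_bflag.mp hy
  exact inc_cmk_same l m g

lemma typ_bflag (J : Set (Fin 3)) (g : G) :
    (cosetGeometry Gi).typ '' bflag Gi J g = J := by
  ext l
  constructor
  · rintro ⟨x, hx, rfl⟩
    obtain ⟨m, hm, rfl⟩ := mem_bflag.mp hx
    exact hm
  · intro hl
    exact ⟨cmk Gi l g, cmk_mem_bflag hl, rfl⟩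

lemma rmul_bflag (a : G) (J : Set (Fin 3)) (g : G) :
    rmul Gi a '' bflag Gi J g = bflag Gi J (g * a) := by
  unfold bflag
  rw [Set.image_image]
  exact Set.image_congr fun l _ => rmul_cmk a l g

lemma bflag_isChamber (g : G) :
    (cosetGeometry Gi).IsChamber (bflag Gi Set.univ g) :=
  ⟨bflag_isFlag _ _, by rw [typ_bflag]⟩

end AuxFlag

section AuxFin3

lemma fin3_cases : ∀ (i j k l : Fin 3), i ≠ j → i ≠ k → j ≠ k → (l = i ∨ l = j ∨ l = k) := by
  decide

lemma fin3_ne_iff : ∀ (i j k l : Fin 3), i ≠ j → i ≠ k → j ≠ k → ((l ≠ j ∧ l ≠ k) ↔ l = i) := by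
  decide

lemma fin3_two : ∀ (i j c d : Fin 3), i ≠ j → c ≠ i → c ≠ j → d ≠ i → d ≠ j → c = d := by
  decide

/-- First index different from `i`. -/
def oth1 : Fin 3 → Fin 3 := ![1, 0, 0]
/-- Second index different from `i`. -/
def oth2 : Fin 3 → Fin 3 := ![2, 2, 1]

lemma oth_spec : ∀ i : Fin 3, i ≠ oth1 i ∧ i ≠ oth2 i ∧ oth1 i ≠ oth2 i := by decide

lemma compl_pair : ∀ (i j k : Fin 3), i ≠ j → i ≠ k → j ≠ k →
    ({j}ᶜ ∩ {k}ᶜ : Set (Fin 3)) = {i} := by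
  intro i j k hij hik hjk
  ext l
  simp only [Set.mem_inter_iff, Set.mem_compl_iff, Set.mem_singleton_iff]
  exact fin3_ne_iff i j k l hij hik hjk

end AuxFin3

section AuxCGroup

variable {G : Type*} [Group G] {ρ : Fin 3 → G} {Gi : Fin 3 → Subgroup G}

lemma mem_closure_invol {g x : G} (hg : g * g = 1) (hx : x ∈ Subgroup.closure {g}) :
    x = 1 ∨ x = g := by
  have hginv : g⁻¹ = g := inv_eq_of_mul_eq_one_right hg
  induction hx using Subgroup.closure_induction with
  | mem x hx => exact Or.inr hx
  | one => exact Or.inl rfl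
  | mul x y hx hy ihx ihy =>
      rcases ihx with rfl | rfl <;> rcases ihy with rfl | rfl <;> simp [hg]
  | inv x hx ih =>
      rcases ih with rfl | rfl
      · simp
      · rw [hginv]; exact Or.inr rfl

variable (hC : IsCGroup ρ) (hGi : ∀ i : Fin 3, Gi i = Subgroup.closure (ρ '' ({i}ᶜ : Set (Fin 3))))

include hC in
lemma rho_sq (i : Fin 3) : ρ i * ρ i = 1 := (hC.1 i).2

include hGi in
lemma rho_mem {i j : Fin 3} (h : i ≠ j) : ρ i ∈ Gi j := by
  rw [hGi j]
  exact Subgroup.subset_closure ⟨i, h, rfl⟩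

include hC hGi in
lemma rho_not_mem (i : Fin 3) : ρ i ∉ Gi i := by
  intro h
  have h1 : ρ i ∈ Subgroup.closure (ρ '' ({i} : Set (Fin 3))) :=
    Subgroup.subset_closure ⟨i, rfl, rfl⟩
  have h2 := hC.2.2 {i} ({i}ᶜ)
  rw [Set.inter_compl_self, Set.image_empty, Subgroup.closure_empty] at h2
  have : ρ i ∈ (⊥ : Subgroup G) := by
    rw [← h2]
    exact ⟨h1, by rwa [hGi i] at h⟩
  exact (hC.1 i).1 (Subgroup.mem_bot.mp this)

include hC hGi in
lemma pair_inter {i j k : Fin 3} (hij : i ≠ j) (hik : i ≠ k) (hjk : j ≠ k) {x : G}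
    (hxj : x ∈ Gi j) (hxk : x ∈ Gi k) : x = 1 ∨ x = ρ i := by
  have h2 := hC.2.2 ({j}ᶜ) ({k}ᶜ)
  rw [compl_pair i j k hij hik hjk, Set.image_singleton] at h2
  have hx : x ∈ Subgroup.closure ({ρ i} : Set G) := by
    rw [← h2]
    exact ⟨by rwa [hGi j] at hxj, by rwa [hGi k] at hxk⟩
  exact mem_closure_invol (rho_sq hC i) hx

include hC hGi in
lemma triple_inter {x : G} (h0 : x ∈ Gi 0) (h1 : x ∈ Gi 1) (h2 : x ∈ Gi 2) : x = 1 := by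
  rcases pair_inter hC hGi (show (0:Fin 3) ≠ 1 by decide) (show (0:Fin 3) ≠ 2 by decide)
      (show (1:Fin 3) ≠ 2 by decide) h1 h2 with h | h
  · exact h
  · subst h
    exact absurd h0 (rho_not_mem hC hGi 0)

end AuxCGroup

section AuxThin

variable {G : Type*} [Group G] {ρ : Fin 3 → G} {Gi : Fin 3 → Subgroup G}
variable (hC : IsCGroup ρ)
  (hGi : ∀ i : Fin 3, Gi i = Subgroup.closure (ρ '' ({i}ᶜ : Set (Fin 3))))

lemma flag_typ_inj {F : Set (CosetElt Gi)} (hF : (cosetGeometry Gi).IsFlag F)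
    {x y : CosetElt Gi} (hx : x ∈ F) (hy : y ∈ F)
    (ht : (cosetGeometry Gi).typ x = (cosetGeometry Gi).typ y) : x = y :=
  (cosetGeometry Gi).eq_of_inc_of_typ_eq x y (hF x hx y hy) ht

include hC hGi in
lemma thin_K (hThin : (cosetGeometry Gi).Thin) {i j k : Fin 3}
    (hij : i ≠ j) (hik : i ≠ k) (hjk : j ≠ k) {a g : G}
    (h1 : (cosetGeometry Gi).inc (cmk Gi i a) (cmk Gi j g))
    (h2 : (cosetGeometry Gi).inc (cmk Gi i a) (cmk Gi k g)) :
    cmk Gi i a = cmk Gi i g ∨ cmk Gi i a = cmk Gi i (ρ i * g) := by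
  have hFlag : (cosetGeometry Gi).IsFlag (bflag Gi {j, k} g) := bflag_isFlag _ _
  have htypF : (cosetGeometry Gi).typ '' (bflag Gi {j, k} g) = {j, k} := typ_bflag _ _
  have hnotmemF : ∀ b : G, cmk Gi i b ∉ bflag Gi {j, k} g := by
    intro b hb
    obtain ⟨l, hl, he⟩ := mem_bflag.mp hb
    have hil : i = l := cmk_type_eq he
    subst hil
    rcases hl with h | h
    exacts [hij h, hik h]
  have hmem : ∀ b : G,
      (∀ l ∈ ({j, k} : Set (Fin 3)), (cosetGeometry Gi).inc (cmk Gi i b) (cmk Gi l g)) →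
      cmk Gi i b ∈ (cosetGeometry Gi).res (bflag Gi {j, k} g) := by
    intro b hb
    refine ⟨hnotmemF b, fun f hf => ?_⟩
    obtain ⟨l, hl, rfl⟩ := mem_bflag.mp hf
    exact hb l hl
  have huniq : ∃! l : Fin 3, l ∉ (cosetGeometry Gi).typ '' (bflag Gi {j, k} g) := by
    refine ⟨i, ?_, ?_⟩
    · rw [htypF]; rintro (h | h); exacts [hij h, hik h]
    · intro l hl
      rw [htypF] at hl
      simp only [Set.mem_insert_iff, Set.mem_singleton_iff] at hl
      push_neg at hl
      exact (fin3_ne_iff i j k l hij hik hjk).mp hl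
  obtain ⟨x, y, hxy, hres⟩ := hThin (bflag Gi {j, k} g) hFlag huniq
  have m1 : cmk Gi i g ∈ (cosetGeometry Gi).res (bflag Gi {j, k} g) :=
    hmem g (fun l _ => inc_cmk_same i l g)
  have m2 : cmk Gi i (ρ i * g) ∈ (cosetGeometry Gi).res (bflag Gi {j, k} g) := by
    refine hmem (ρ i * g) (fun l hl => inc_of_mem (mem_rcoset_self _ _) ?_)
    have hil : i ≠ l := by
      rcases hl with h | h
      · exact h ▸ hij
      · exact h ▸ hik
    show (ρ i * g) * g⁻¹ ∈ Gi l
    rw [mul_inv_cancel_right]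
    exact rho_mem hGi hil
  have m3 : cmk Gi i a ∈ (cosetGeometry Gi).res (bflag Gi {j, k} g) := by
    refine hmem a (fun l hl => ?_)
    rcases hl with h | h
    · exact h ▸ h1
    · exact h ▸ h2
  have ne12 : cmk Gi i g ≠ cmk Gi i (ρ i * g) := by
    intro e
    have := cmk_eq_iff.mp e
    rw [mul_inv_cancel_right] at this
    exact rho_not_mem hC hGi i this
  rw [hres] at m1 m2 m3
  simp only [Set.mem_insert_iff, Set.mem_singleton_iff] at m1 m2 m3
  rcases m3 with h3 | h3 <;> rcases m1 with h1' | h1' <;> rcases m2 with h2' | h2' <;>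
    first
      | (left; exact h3.trans h1'.symm)
      | (right; exact h3.trans h2'.symm)
      | (exact absurd (h1'.trans h2'.symm) ne12)

include hC hGi in
lemma flag_common (hThin : (cosetGeometry Gi).Thin) {F : Set (CosetElt Gi)}
    (hF : (cosetGeometry Gi).IsFlag F) :
    ∃ g : G, ∀ x ∈ F, x = cmk Gi ((cosetGeometry Gi).typ x) g := by
  by_cases hne : F.Nonempty
  case neg => exact ⟨1, fun x hx => absurd ⟨x, hx⟩ hne⟩
  obtain ⟨x₀, hx₀⟩ := hne
  obtain ⟨g₀, hg₀⟩ := exists_cmk x₀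
  by_cases h1 : ∀ y ∈ F, y = x₀
  · exact ⟨g₀, fun x hx => by rw [h1 x hx]; exact hg₀⟩
  push_neg at h1
  obtain ⟨y₀, hy₀, hy₀ne⟩ := h1
  obtain ⟨g₁, hg₁⟩ := exists_cmk y₀
  have ht10 : (cosetGeometry Gi).typ y₀ ≠ (cosetGeometry Gi).typ x₀ :=
    fun e => hy₀ne (flag_typ_inj hF hy₀ hx₀ e)
  -- common point of x₀ and y₀
  obtain ⟨c, hc1, hc0⟩ : ∃ c, c ∈ rcoset (Gi ((cosetGeometry Gi).typ y₀)) g₁ ∧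
      c ∈ rcoset (Gi ((cosetGeometry Gi).typ x₀)) g₀ := by
    have := hF y₀ hy₀ x₀ hx₀
    rw [hg₁, hg₀] at this
    exact this
  have hx₀c : x₀ = cmk Gi ((cosetGeometry Gi).typ x₀) c := hg₀.trans (cmk_base_change hc0)
  have hy₀c : y₀ = cmk Gi ((cosetGeometry Gi).typ y₀) c := hg₁.trans (cmk_base_change hc1)
  by_cases h2 : ∀ z ∈ F, z = x₀ ∨ z = y₀
  · refine ⟨c, fun x hx => ?_⟩
    rcases h2 x hx with e | e <;> rw [e]
    exacts [hx₀c, hy₀c]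
  push_neg at h2
  obtain ⟨z₀, hz₀, hz₀x, hz₀y⟩ := h2
  obtain ⟨g₂, hg₂⟩ := exists_cmk z₀
  have ht20 : (cosetGeometry Gi).typ z₀ ≠ (cosetGeometry Gi).typ x₀ :=
    fun e => hz₀x (flag_typ_inj hF hz₀ hx₀ e)
  have ht21 : (cosetGeometry Gi).typ z₀ ≠ (cosetGeometry Gi).typ y₀ :=
    fun e => hz₀y (flag_typ_inj hF hz₀ hy₀ e)
  -- common point of y₀ and z₀
  obtain ⟨d, hd1, hd2⟩ : ∃ d, d ∈ rcoset (Gi ((cosetGeometry Gi).typ y₀)) c ∧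
      d ∈ rcoset (Gi ((cosetGeometry Gi).typ z₀)) g₂ := by
    have := hF y₀ hy₀ z₀ hz₀
    rw [hy₀c, hg₂] at this
    exact this
  have hy₀d : y₀ = cmk Gi ((cosetGeometry Gi).typ y₀) d := hy₀c.trans (cmk_base_change hd1)
  have hz₀d : z₀ = cmk Gi ((cosetGeometry Gi).typ z₀) d := hg₂.trans (cmk_base_change hd2)
  -- x₀ incident to both at base point d
  have hi1 : (cosetGeometry Gi).inc (cmk Gi ((cosetGeometry Gi).typ x₀) g₀)
      (cmk Gi ((cosetGeometry Gi).typ y₀) d) := by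
    rw [← hg₀, ← hy₀d]; exact hF x₀ hx₀ y₀ hy₀
  have hi2 : (cosetGeometry Gi).inc (cmk Gi ((cosetGeometry Gi).typ x₀) g₀)
      (cmk Gi ((cosetGeometry Gi).typ z₀) d) := by
    rw [← hg₀, ← hz₀d]; exact hF x₀ hx₀ z₀ hz₀
  have hK := thin_K hC hGi hThin (Ne.symm ht10) (Ne.symm ht20)
    (fun e => ht21 e.symm) hi1 hi2
  have key : ∃ g : G, x₀ = cmk Gi ((cosetGeometry Gi).typ x₀) g ∧
      y₀ = cmk Gi ((cosetGeometry Gi).typ y₀) g ∧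
      z₀ = cmk Gi ((cosetGeometry Gi).typ z₀) g := by
    rcases hK with h | h
    · exact ⟨d, hg₀.trans h, hy₀d, hz₀d⟩
    · refine ⟨ρ ((cosetGeometry Gi).typ x₀) * d, hg₀.trans h, ?_, ?_⟩
      · refine hy₀d.trans (cmk_eq_iff.mpr ?_)
        rw [mul_inv_cancel_right]
        exact rho_mem hGi (Ne.symm ht10)
      · refine hz₀d.trans (cmk_eq_iff.mpr ?_)
        rw [mul_inv_cancel_right]
        exact rho_mem hGi (Ne.symm ht20)
  obtain ⟨g, k0, k1, k2⟩ := key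
  refine ⟨g, fun x hx => ?_⟩
  rcases fin3_cases ((cosetGeometry Gi).typ x₀) ((cosetGeometry Gi).typ y₀)
      ((cosetGeometry Gi).typ z₀) ((cosetGeometry Gi).typ x)
      (Ne.symm ht10) (Ne.symm ht20) (fun e => ht21 e.symm) with ht | ht | ht
  · rw [flag_typ_inj hF hx hx₀ ht]; exact k0
  · rw [flag_typ_inj hF hx hy₀ ht]; exact k1
  · rw [flag_typ_inj hF hx hz₀ ht]; exact k2

include hC hGi in
lemma flag_eq_bflag (hThin : (cosetGeometry Gi).Thin) {F : Set (CosetElt Gi)}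
    (hF : (cosetGeometry Gi).IsFlag F) :
    ∃ g : G, F = bflag Gi ((cosetGeometry Gi).typ '' F) g := by
  obtain ⟨g, hg⟩ := flag_common hC hGi hThin hF
  refine ⟨g, Set.Subset.antisymm ?_ ?_⟩
  · intro x hx
    exact mem_bflag.mpr ⟨(cosetGeometry Gi).typ x, ⟨x, hx, rfl⟩, hg x hx⟩
  · intro y hy
    obtain ⟨l, ⟨x, hx, rfl⟩, rfl⟩ := mem_bflag.mp hy
    rw [← hg x hx]
    exact hx

end AuxThin

section AuxTrans

variable {G : Type*} [Group G] {ρ : Fin 3 → G} {Gi : Fin 3 → Subgroup G}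
variable (hC : IsCGroup ρ)
  (hGi : ∀ i : Fin 3, Gi i = Subgroup.closure (ρ '' ({i}ᶜ : Set (Fin 3))))

include hC hGi in
lemma gft_of_thin (hThin : (cosetGeometry Gi).Thin) : GFlagTransitive Gi := by
  intro F F' hF hF' htyp
  obtain ⟨g, hg⟩ := flag_eq_bflag hC hGi hThin hF
  obtain ⟨g', hg'⟩ := flag_eq_bflag hC hGi hThin hF'
  refine ⟨g⁻¹ * g', ?_⟩
  rw [hg, rmul_bflag, htyp, mul_inv_cancel_left]
  exact hg'.symm

include hC hGi in
lemma gfree_of_thin (hThin : (cosetGeometry Gi).Thin) : GFree Gi := by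
  intro a C hCh hfix
  obtain ⟨g, hg⟩ := flag_eq_bflag hC hGi hThin hCh.1
  rw [hCh.2] at hg
  rw [hg, rmul_bflag] at hfix
  have key : ∀ l : Fin 3, (g * a) * g⁻¹ ∈ Gi l := by
    intro l
    have hmem : cmk Gi l (g * a) ∈ bflag Gi Set.univ g := by
      rw [← hfix]; exact cmk_mem_bflag (Set.mem_univ l)
    obtain ⟨m, _, he⟩ := mem_bflag.mp hmem
    have hlm : l = m := cmk_type_eq he
    subst hlm
    exact (Gi l).inv_mem_iff.mp (by simpa using cmk_eq_iff.mp he)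
  have h1 : (g * a) * g⁻¹ = 1 := triple_inter hC hGi (key 0) (key 1) (key 2)
  have h2 : g * a = g := mul_inv_eq_one.mp h1
  have := h2.trans (mul_one g).symm
  exact mul_left_cancel this

lemma cmk_not_mem_bflag_pair {i j k : Fin 3} (hij : i ≠ j) (hik : i ≠ k) (g b : G) :
    cmk Gi i b ∉ bflag Gi {j, k} g := by
  intro hb
  obtain ⟨l, hl, he⟩ := mem_bflag.mp hb
  have hil : i = l := cmk_type_eq he
  subst hil
  rcases hl with h | h
  exacts [hij h, hik h]

lemma cmk_mem_res_bflag_pair {i j k : Fin 3} (hij : i ≠ j) (hik : i ≠ k) {g b : G}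
    (hb : ∀ l ∈ ({j, k} : Set (Fin 3)),
      (cosetGeometry Gi).inc (cmk Gi i b) (cmk Gi l g)) :
    cmk Gi i b ∈ (cosetGeometry Gi).res (bflag Gi {j, k} g) := by
  refine ⟨cmk_not_mem_bflag_pair hij hik g b, fun f hf => ?_⟩
  obtain ⟨l, hl, rfl⟩ := mem_bflag.mp hf
  exact hb l hl

include hC hGi in
lemma thin_of_gft (hgft : GFlagTransitive Gi) : (cosetGeometry Gi).Thin := by
  intro F hF huniq
  obtain ⟨i, hi, hiu⟩ := huniq
  obtain ⟨hij, hik, hjk⟩ := oth_spec i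
  set j := oth1 i with hj
  set k := oth2 i with hk
  have hjF : j ∈ (cosetGeometry Gi).typ '' F := by
    by_contra h
    exact hij (hiu j h).symm
  have hkF : k ∈ (cosetGeometry Gi).typ '' F := by
    by_contra h
    exact hik (hiu k h).symm
  obtain ⟨y, hyF, hyt⟩ := hjF
  obtain ⟨z, hzF, hzt⟩ := hkF
  obtain ⟨gy, hgy⟩ := exists_cmk y
  obtain ⟨gz, hgz⟩ := exists_cmk z
  rw [hyt] at hgy
  rw [hzt] at hgz
  obtain ⟨g, hg1, hg2⟩ : ∃ c, c ∈ rcoset (Gi j) gy ∧ c ∈ rcoset (Gi k) gz := by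
    have := hF y hyF z hzF
    rw [hgy, hgz] at this
    exact this
  have hyg : y = cmk Gi j g := hgy.trans (cmk_base_change hg1)
  have hzg : z = cmk Gi k g := hgz.trans (cmk_base_change hg2)
  have hFeq : F = bflag Gi {j, k} g := by
    apply Set.Subset.antisymm
    · intro x hx
      rcases fin3_cases i j k ((cosetGeometry Gi).typ x) hij hik hjk with ht | ht | ht
      · exact absurd ⟨x, hx, ht⟩ hi
      · have : x = y := flag_typ_inj hF hx hyF (ht.trans hyt.symm)
        rw [this, hyg]
        exact cmk_mem_bflag (Set.mem_insert j _)
      · have : x = z := flag_typ_inj hF hx hzF (ht.trans hzt.symm)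
        rw [this, hzg]
        exact cmk_mem_bflag (Set.mem_insert_of_mem _ rfl)
    · intro w hw
      obtain ⟨l, hl, rfl⟩ := mem_bflag.mp hw
      rcases hl with h | h
      · subst h; rw [← hyg]; exact hyF
      · rw [Set.mem_singleton_iff] at h; subst h; rw [← hzg]; exact hzF
  have ne12 : cmk Gi i g ≠ cmk Gi i (ρ i * g) := by
    intro e
    have := cmk_eq_iff.mp e
    rw [mul_inv_cancel_right] at this
    exact rho_not_mem hC hGi i this
  refine ⟨cmk Gi i g, cmk Gi i (ρ i * g), ne12, ?_⟩
  rw [hFeq]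
  ext x
  constructor
  · rintro ⟨hxnot, hxinc⟩
    obtain ⟨b, hb⟩ := exists_cmk x
    have htx : (cosetGeometry Gi).typ x = i := by
      rcases fin3_cases i j k ((cosetGeometry Gi).typ x) hij hik hjk with ht | ht | ht
      · exact ht
      · exfalso
        have hinc := hxinc (cmk Gi j g) (cmk_mem_bflag (Set.mem_insert j _))
        have := (cosetGeometry Gi).eq_of_inc_of_typ_eq x (cmk Gi j g) hinc (ht.trans rfl)
        exact hxnot (this ▸ cmk_mem_bflag (Set.mem_insert j _))
      · exfalso
        have hinc := hxinc (cmk Gi k g) (cmk_mem_bflag (Set.mem_insert_of_mem _ rfl))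
        have := (cosetGeometry Gi).eq_of_inc_of_typ_eq x (cmk Gi k g) hinc (ht.trans rfl)
        exact hxnot (this ▸ cmk_mem_bflag (Set.mem_insert_of_mem _ rfl))
    rw [htx] at hb
    have i1 : (cosetGeometry Gi).inc (cmk Gi i b) (cmk Gi j g) := by
      rw [← hb]; exact hxinc (cmk Gi j g) (cmk_mem_bflag (Set.mem_insert j _))
    have i2 : (cosetGeometry Gi).inc (cmk Gi i b) (cmk Gi k g) := by
      rw [← hb]; exact hxinc (cmk Gi k g) (cmk_mem_bflag (Set.mem_insert_of_mem _ rfl))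
    -- build the chamber containing x and the pair flag
    have hCflag : (cosetGeometry Gi).IsFlag (insert (cmk Gi i b) (bflag Gi {j, k} g)) := by
      intro u hu v hv
      rcases hu with rfl | hu <;> rcases hv with rfl | hv
      · exact (cosetGeometry Gi).inc_refl _
      · obtain ⟨l, hl, rfl⟩ := mem_bflag.mp hv
        rcases hl with h | h
        · subst h; exact i1
        · rw [Set.mem_singleton_iff] at h; subst h; exact i2
      · obtain ⟨l, hl, rfl⟩ := mem_bflag.mp hu
        apply (cosetGeometry Gi).inc_symm
        rcases hl with h | h
        · subst h; exact i1
        · rw [Set.mem_singleton_iff] at h; subst h; exact i2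
      · exact bflag_isFlag _ _ u hu v hv
    have hCtyp : (cosetGeometry Gi).typ '' (insert (cmk Gi i b) (bflag Gi {j, k} g)) =
        Set.univ := by
      rw [Set.image_insert_eq, typ_bflag]
      ext l
      simp only [Set.mem_insert_iff, Set.mem_singleton_iff, Set.mem_univ, iff_true, typ_cmk]
      exact fin3_cases i j k l hij hik hjk
    obtain ⟨d, hd⟩ := hgft (bflag Gi Set.univ g) (insert (cmk Gi i b) (bflag Gi {j, k} g))
      (bflag_isFlag _ _) hCflag (by rw [typ_bflag, hCtyp])
    rw [rmul_bflag] at hd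
    have hmatch : ∀ l : Fin 3, l ≠ i → cmk Gi l (g * d) = cmk Gi l g := by
      intro l hl
      have hmem : cmk Gi l (g * d) ∈ insert (cmk Gi i b) (bflag Gi {j, k} g) := by
        rw [← hd]; exact cmk_mem_bflag (Set.mem_univ l)
      rcases hmem with h | h
      · exact absurd (cmk_type_eq h) hl
      · obtain ⟨m, _, he⟩ := mem_bflag.mp h
        have : l = m := cmk_type_eq he
        subst this
        exact he
    have hji : g * (g * d)⁻¹ ∈ Gi j := cmk_eq_iff.mp (hmatch j (Ne.symm hij))
    have hki : g * (g * d)⁻¹ ∈ Gi k := cmk_eq_iff.mp (hmatch k (Ne.symm hik))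
    have hgd : g * d = g ∨ g * d = ρ i * g := by
      rcases pair_inter hC hGi hij hik hjk hji hki with h | h
      · left
        have : g = g * d := mul_inv_eq_one.mp h
        exact this.symm
      · right
        have h2 : ρ i * (g * d) = g := by rw [← h]; group
        calc g * d = (ρ i * ρ i) * (g * d) := by rw [rho_sq hC i, one_mul]
          _ = ρ i * (ρ i * (g * d)) := by rw [mul_assoc]
          _ = ρ i * g := by rw [h2]
    have hib : cmk Gi i (g * d) = cmk Gi i b := by
      have hmem : cmk Gi i (g * d) ∈ insert (cmk Gi i b) (bflag Gi {j, k} g) := by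
        rw [← hd]; exact cmk_mem_bflag (Set.mem_univ i)
      rcases hmem with h | h
      · exact h
      · exact absurd h (cmk_not_mem_bflag_pair hij hik g _)
    rw [hb, ← hib]
    rcases hgd with h | h <;> rw [h]
    · exact Set.mem_insert _ _
    · exact Set.mem_insert_of_mem _ rfl
  · intro hx
    rcases hx with h | h
    · subst h
      exact cmk_mem_res_bflag_pair hij hik (fun l _ => inc_cmk_same i l g)
    · rw [Set.mem_singleton_iff] at h
      subst h
      refine cmk_mem_res_bflag_pair hij hik (fun l hl => inc_of_mem (mem_rcoset_self _ _) ?_)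
      have hil : i ≠ l := by
        rcases hl with h | h
        · exact h ▸ hij
        · exact h ▸ hik
      show (ρ i * g) * g⁻¹ ∈ Gi l
      rw [mul_inv_cancel_right]
      exact rho_mem hGi hil

/-- Right multiplication as a permutation. -/
def rmulPerm (Gi : Fin 3 → Subgroup G) (a : G) : Equiv.Perm (CosetElt Gi) where
  toFun := rmul Gi a
  invFun := rmul Gi a⁻¹
  left_inv := fun x => by
    obtain ⟨i, g, rfl⟩ := exists_cmk' x
    rw [rmul_cmk, rmul_cmk, mul_inv_cancel_right]
  right_inv := fun x => by
    obtain ⟨i, g, rfl⟩ := exists_cmk' x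
    rw [rmul_cmk, rmul_cmk, inv_mul_cancel_right]

lemma rmulPerm_isAut (a : G) : (cosetGeometry Gi).IsAut (rmulPerm Gi a) := by
  constructor
  · intro x
    obtain ⟨i, g, rfl⟩ := exists_cmk' x
    show (cosetGeometry Gi).typ (rmul Gi a _) = _
    rw [rmul_cmk]
    rfl
  · intro x y
    obtain ⟨i, g, rfl⟩ := exists_cmk' x
    obtain ⟨j, h, rfl⟩ := exists_cmk' y
    show (cosetGeometry Gi).inc (rmul Gi a _) (rmul Gi a _) ↔ _
    rw [rmul_cmk, rmul_cmk]
    constructor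
    · rintro ⟨c, hc1, hc2⟩
      refine ⟨c * a⁻¹, ?_, ?_⟩
      · show c * a⁻¹ ∈ rcoset (Gi i) g
        rw [mem_rcoset_iff]
        have e : c * a⁻¹ * g⁻¹ = c * (g * a)⁻¹ := by group
        rw [e]
        exact mem_rcoset_iff.mp hc1
      · show c * a⁻¹ ∈ rcoset (Gi j) h
        rw [mem_rcoset_iff]
        have e : c * a⁻¹ * h⁻¹ = c * (h * a)⁻¹ := by group
        rw [e]
        exact mem_rcoset_iff.mp hc2
    · rintro ⟨c, hc1, hc2⟩
      refine ⟨c * a, ?_, ?_⟩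
      · show c * a ∈ rcoset (Gi i) (g * a)
        rw [mem_rcoset_iff]
        have e : c * a * (g * a)⁻¹ = c * g⁻¹ := by group
        rw [e]
        exact mem_rcoset_iff.mp hc1
      · show c * a ∈ rcoset (Gi j) (h * a)
        rw [mem_rcoset_iff]
        have e : c * a * (h * a)⁻¹ = c * h⁻¹ := by group
        rw [e]
        exact mem_rcoset_iff.mp hc2

lemma flagtrans_of_gft (hgft : GFlagTransitive Gi) : (cosetGeometry Gi).FlagTransitive := by
  intro F F' hF hF' ht
  obtain ⟨a, ha⟩ := hgft F F' hF hF' ht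
  exact ⟨rmulPerm Gi a, rmulPerm_isAut a, ha⟩

include hC hGi in
lemma geometry_of_thin (hThin : (cosetGeometry Gi).Thin) : (cosetGeometry Gi).IsGeometry := by
  intro F hF
  obtain ⟨g, hg⟩ := flag_eq_bflag hC hGi hThin hF
  refine ⟨bflag Gi Set.univ g, bflag_isChamber g, ?_⟩
  rw [hg]
  intro x hx
  obtain ⟨l, _, rfl⟩ := mem_bflag.mp hx
  exact cmk_mem_bflag (Set.mem_univ l)

end AuxTrans

section AuxConn

variable {G : Type*} [Group G] {ρ : Fin 3 → G} {Gi : Fin 3 → Subgroup G}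
variable (hC : IsCGroup ρ)
  (hGi : ∀ i : Fin 3, Gi i = Subgroup.closure (ρ '' ({i}ᶜ : Set (Fin 3))))

/-- The third index. -/
def thrd : Fin 3 → Fin 3 → Fin 3 := fun i j => ![![0, 2, 1], ![2, 1, 0], ![1, 0, 2]] i j

lemma thrd_spec : ∀ i j : Fin 3, i ≠ j → thrd i j ≠ i ∧ thrd i j ≠ j := by decide

lemma connRel_symm (S : Set (CosetElt Gi)) :
    Symmetric (fun a b : CosetElt Gi => a ∈ S ∧ b ∈ S ∧ a ≠ b ∧ (cosetGeometry Gi).inc a b) :=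
  fun _ _ ⟨h1, h2, h3, h4⟩ => ⟨h2, h1, h3.symm, (cosetGeometry Gi).inc_symm _ _ h4⟩

lemma cmk_ne_of_type_ne {i j : Fin 3} (hij : i ≠ j) (a b : G) :
    cmk Gi i a ≠ cmk Gi j b := fun e => hij (cmk_type_eq e)

lemma rho_inv (hC : IsCGroup ρ) (i : Fin 3) : (ρ i)⁻¹ = ρ i :=
  inv_eq_of_mul_eq_one_right (rho_sq hC i)

/-- Path in the incidence graph of the residue of `F`. -/
abbrev ResPath (Gi : Fin 3 → Subgroup G) (F : Set (CosetElt Gi)) (x y : CosetElt Gi) : Prop :=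
  Relation.ReflTransGen
    (fun a b : CosetElt Gi => a ∈ (cosetGeometry Gi).res F ∧
      b ∈ (cosetGeometry Gi).res F ∧ a ≠ b ∧ (cosetGeometry Gi).inc a b) x y

section ResEmpty

lemma res_empty_mem (x : CosetElt Gi) : x ∈ (cosetGeometry Gi).res (∅ : Set (CosetElt Gi)) :=
  ⟨fun h => h, fun f hf => absurd hf (Set.notMem_empty f)⟩


lemma conn0_step (i j : Fin 3) (a : G) : ResPath Gi ∅ (cmk Gi i a) (cmk Gi j a) := by
  by_cases hij : i = j
  · subst hij; exact Relation.ReflTransGen.refl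
  · exact Relation.ReflTransGen.single
      ⟨res_empty_mem _, res_empty_mem _, cmk_ne_of_type_ne hij a a, inc_cmk_same i j a⟩

lemma conn0_lift (c : G) {x y : CosetElt Gi} (h : ResPath Gi ∅ x y) :
    ResPath Gi ∅ (rmul Gi c x) (rmul Gi c y) := by
  refine Relation.ReflTransGen.lift (rmul Gi c) ?_ _ _ h
  rintro a b ⟨_, _, hne, hinc⟩
  exact ⟨res_empty_mem _, res_empty_mem _,
    fun e => hne ((rmulPerm Gi c).injective e),
    ((rmulPerm_isAut c).2 a b).mpr hinc⟩

include hC hGi in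
lemma conn0_main (a : G) : ∀ i : Fin 3, ResPath Gi ∅ (cmk Gi i a) (cmk Gi 0 1) := by
  have ha : a ∈ Subgroup.closure (Set.range ρ) := by rw [hC.2.1]; trivial
  induction ha using Subgroup.closure_induction with
  | mem x hx =>
    obtain ⟨m, rfl⟩ := hx
    intro i
    by_cases him : m = i
    · subst him
      have hmo := (oth_spec m).1
      have h1 : ResPath Gi ∅ (cmk Gi m (ρ m)) (cmk Gi (oth1 m) (ρ m)) :=
        conn0_step m (oth1 m) (ρ m)
      have h2 : cmk Gi (oth1 m) (ρ m) = cmk Gi (oth1 m) 1 := by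
        rw [cmk_eq_iff, one_mul]
        exact (Gi (oth1 m)).inv_mem (rho_mem hGi hmo)
      exact h1.trans (h2 ▸ conn0_step (oth1 m) 0 1)
    · have h2 : cmk Gi i (ρ m) = cmk Gi i 1 := by
        rw [cmk_eq_iff, one_mul]
        exact (Gi i).inv_mem (rho_mem hGi him)
      rw [h2]
      exact conn0_step i 0 1
  | one =>
    intro i
    exact conn0_step i 0 1
  | mul x y hx hy ihx ihy =>
    intro i
    have h1 : ResPath Gi ∅ (cmk Gi i (x * y)) (cmk Gi 0 y) := by
      have := conn0_lift y (ihx i)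
      rw [rmul_cmk, rmul_cmk, one_mul] at this
      exact this
    exact h1.trans (ihy 0)
  | inv x hx ihx =>
    intro i
    have h1 : ResPath Gi ∅ (cmk Gi i x⁻¹) (cmk Gi 0 x⁻¹) := conn0_step i 0 x⁻¹
    have h2 : ResPath Gi ∅ (cmk Gi 0 x⁻¹) (cmk Gi 0 1) := by
      have := conn0_lift x⁻¹ (((@Relation.ReflTransGen.symmetric _ _ ⟨fun a b h => connRel_symm _ h⟩).symm _ _) (ihx 0))
      rw [rmul_cmk, rmul_cmk, one_mul, mul_inv_cancel] at this
      exact this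
    exact h1.trans h2

end ResEmpty

section ResSingle

variable {i0 : Fin 3} {a0 : G}

lemma res_single_mem {l : Fin 3} (hl : l ≠ i0) {c : G} (hc : c ∈ rcoset (Gi i0) a0) :
    cmk Gi l c ∈ (cosetGeometry Gi).res ({cmk Gi i0 a0} : Set (CosetElt Gi)) := by
  refine ⟨fun h => hl (cmk_type_eq h), fun f hf => ?_⟩
  rw [Set.mem_singleton_iff] at hf
  subst hf
  exact inc_of_mem (mem_rcoset_self _ _) hc

lemma res_single_shape {x : CosetElt Gi}
    (hx : x ∈ (cosetGeometry Gi).res ({cmk Gi i0 a0} : Set (CosetElt Gi))) :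
    ∃ l c, l ≠ i0 ∧ c ∈ rcoset (Gi i0) a0 ∧ x = cmk Gi l c := by
  obtain ⟨hnot, hinc⟩ := hx
  obtain ⟨l, b, rfl⟩ := exists_cmk' x
  have hl : l ≠ i0 := by
    intro e
    subst e
    have := (cosetGeometry Gi).eq_of_inc_of_typ_eq _ _ (hinc _ rfl) rfl
    exact hnot (this ▸ rfl)
  obtain ⟨c, hc1, hc2⟩ := hinc (cmk Gi i0 a0) rfl
  exact ⟨l, c, hl, hc2, cmk_base_change hc1⟩


lemma conn1_edge {l1 l2 : Fin 3} (h1 : l1 ≠ i0) (h2 : l2 ≠ i0) (h12 : l1 ≠ l2) {c : G}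
    (hc : c ∈ rcoset (Gi i0) a0) : ResPath Gi {cmk Gi i0 a0} (cmk Gi l1 c) (cmk Gi l2 c) :=
  Relation.ReflTransGen.single
    ⟨res_single_mem h1 hc, res_single_mem h2 hc, cmk_ne_of_type_ne h12 c c,
      inc_cmk_same l1 l2 c⟩

include hC hGi in
lemma conn1_main {u : G} (hu : u ∈ Gi i0) :
    ∀ c ∈ rcoset (Gi i0) a0, ∀ l, l ≠ i0 → ResPath Gi {cmk Gi i0 a0} (cmk Gi l (u * c)) (cmk Gi l c) := by
  rw [hGi i0] at hu
  induction hu using Subgroup.closure_induction with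
  | mem x hx =>
    obtain ⟨m, hm, rfl⟩ := hx
    have hmi0 : m ≠ i0 := hm
    intro c hc l hl
    have hrc : ρ m * c ∈ rcoset (Gi i0) a0 := by
      rw [mem_rcoset_iff, mul_assoc]
      exact (Gi i0).mul_mem (rho_mem hGi hmi0) (mem_rcoset_iff.mp hc)
    by_cases hml : m = l
    · subst hml
      obtain ⟨ht1, ht2⟩ := thrd_spec i0 m (Ne.symm hl)
      have e1 : ResPath Gi {cmk Gi i0 a0} (cmk Gi m (ρ m * c)) (cmk Gi (thrd i0 m) (ρ m * c)) :=
        conn1_edge hl ht1 (Ne.symm ht2) hrc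
      have heq : cmk Gi (thrd i0 m) (ρ m * c) = cmk Gi (thrd i0 m) c := by
        rw [cmk_eq_iff]
        have e : c * (ρ m * c)⁻¹ = (ρ m)⁻¹ := by group
        rw [e, rho_inv hC]
        exact rho_mem hGi (Ne.symm ht2)
      have e2 : ResPath Gi {cmk Gi i0 a0} (cmk Gi (thrd i0 m) c) (cmk Gi m c) :=
        conn1_edge ht1 hl ht2 hc
      exact e1.trans (heq ▸ e2)
    · have heq : cmk Gi l (ρ m * c) = cmk Gi l c := by
        rw [cmk_eq_iff]
        have e : c * (ρ m * c)⁻¹ = (ρ m)⁻¹ := by group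
        rw [e, rho_inv hC]
        exact rho_mem hGi hml
      rw [heq]
  | one =>
    intro c hc l hl
    rw [one_mul]
  | mul x y hx hy ihx ihy =>
    intro c hc l hl
    have hy' : y ∈ Gi i0 := by rw [hGi i0]; exact hy
    have hyc : y * c ∈ rcoset (Gi i0) a0 := by
      rw [mem_rcoset_iff, mul_assoc]
      exact (Gi i0).mul_mem hy' (mem_rcoset_iff.mp hc)
    have h1 := ihx (y * c) hyc l hl
    rw [← mul_assoc] at h1
    exact h1.trans (ihy c hc l hl)
  | inv x hx ih =>
    intro c hc l hl
    have hx' : x ∈ Gi i0 := by rw [hGi i0]; exact hx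
    have hxc : x⁻¹ * c ∈ rcoset (Gi i0) a0 := by
      rw [mem_rcoset_iff, mul_assoc]
      exact (Gi i0).mul_mem ((Gi i0).inv_mem hx') (mem_rcoset_iff.mp hc)
    have h1 := ih (x⁻¹ * c) hxc l hl
    rw [mul_inv_cancel_left] at h1
    exact ((@Relation.ReflTransGen.symmetric _ _ ⟨fun a b h => connRel_symm _ h⟩).symm _ _) h1

end ResSingle

include hC hGi in
lemma rescon : (cosetGeometry Gi).ResiduallyConnected := by
  intro F hF hcond
  obtain ⟨i, j, hij, hiF, hjF⟩ := hcond
  by_cases hne : F.Nonempty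
  · -- F is a singleton
    obtain ⟨x₀, hx₀⟩ := hne
    have hsingle : F = {x₀} := by
      ext z
      simp only [Set.mem_singleton_iff]
      constructor
      · intro hz
        refine flag_typ_inj hF hz hx₀ ?_
        refine fin3_two i j ((cosetGeometry Gi).typ z) ((cosetGeometry Gi).typ x₀) hij
          (fun e => hiF ⟨z, hz, e⟩) (fun e => hjF ⟨z, hz, e⟩)
          (fun e => hiF ⟨x₀, hx₀, e⟩) (fun e => hjF ⟨x₀, hx₀, e⟩)
      · rintro rfl; exact hx₀
    obtain ⟨i0, a0, rfl⟩ := exists_cmk' x₀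
    rw [hsingle]
    obtain ⟨ho1, _, _⟩ := oth_spec i0
    constructor
    · exact ⟨cmk Gi (oth1 i0) a0, res_single_mem (Ne.symm ho1) (mem_rcoset_self _ _)⟩
    · intro x hx y hy
      obtain ⟨l1, c1, hl1, hc1, rfl⟩ := res_single_shape hx
      obtain ⟨l2, c2, hl2, hc2, rfl⟩ := res_single_shape hy
      have hu : c2 * c1⁻¹ ∈ Gi i0 := by
        have e : c2 * c1⁻¹ = (c2 * a0⁻¹) * (c1 * a0⁻¹)⁻¹ := by group
        rw [e]
        exact (Gi i0).mul_mem (mem_rcoset_iff.mp hc2) ((Gi i0).inv_mem (mem_rcoset_iff.mp hc1))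
      have h1 := conn1_main hC hGi hu c1 hc1 l2 hl2
      rw [inv_mul_cancel_right] at h1
      -- h1 : path (cmk l2 c2) (cmk l2 c1)
      have h2 : ResPath Gi {cmk Gi i0 a0} (cmk Gi l2 c1) (cmk Gi l1 c1) := by
        by_cases h12 : l2 = l1
        · subst h12; exact Relation.ReflTransGen.refl
        · exact conn1_edge hl2 hl1 h12 hc1
      exact ((@Relation.ReflTransGen.symmetric _ _ ⟨fun a b h => connRel_symm _ h⟩).symm _ _) (h1.trans h2)
  · -- F is empty
    rw [Set.not_nonempty_iff_eq_empty] at hne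
    subst hne
    constructor
    · exact ⟨cmk Gi 0 1, res_empty_mem _⟩
    · intro x hx y hy
      obtain ⟨l1, c1, rfl⟩ := exists_cmk' x
      obtain ⟨l2, c2, rfl⟩ := exists_cmk' y
      exact (conn0_main hC hGi c1 l1).trans
        (((@Relation.ReflTransGen.symmetric _ _ ⟨fun a b h => connRel_symm _ h⟩).symm _ _) (conn0_main hC hGi c2 l2))

end AuxConn

/-- Proposition 4.4: for rank-3 C-groups, the coset geometry is thin iff G is regular
on it; moreover in that case it is a regular hypertope. -/
theorem stmt_15 {G : Type*} [Group G] (ρ : Fin 3 → G) (hCgrp : IsCGroup ρ)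
    (Gi : Fin 3 → Subgroup G)
    (hGi : ∀ i : Fin 3, Gi i = Subgroup.closure (ρ '' ({i}ᶜ : Set (Fin 3)))) :
    ((cosetGeometry Gi).Thin ↔ (GFlagTransitive Gi ∧ GFree Gi)) ∧
    ((cosetGeometry Gi).Thin →
      (cosetGeometry Gi).IsGeometry ∧ (cosetGeometry Gi).Thin ∧
        (cosetGeometry Gi).ResiduallyConnected ∧ (cosetGeometry Gi).FlagTransitive) := by
  constructor
  · constructor
    · intro hThin
      exact ⟨gft_of_thin hCgrp hGi hThin, gfree_of_thin hCgrp hGi hThin⟩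
    · rintro ⟨hgft, -⟩
      exact thin_of_gft hCgrp hGi hgft
  · intro hThin
    exact ⟨geometry_of_thin hCgrp hGi hThin, hThin, rescon hCgrp hGi,
      flagtrans_of_gft (gft_of_thin hCgrp hGi hThin)⟩
end

section
/- Let (G⁺, R) be a C⁺-group of rank r ≥ 3 with R = {α_1,...,α_{r−1}} and G⁺ nontrivial. Then R is an independent generating set of G⁺: for every i ∈ {1,...,r−1}, α_i ∉ ⟨α_j : j ∈ {1,...,r−1}, j ≠ i⟩. Moreover, for every i ∈ {0,...,r−1}, the intersection of all maximal parabolic subgroups other than the i-th one is trivial: ∩_{j∈{0,...,r−1}, j≠i} G⁺_{{0,...,r−1} \ {j}} = {1}. -/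
open Pointwise

section Aux

variable {Gp : Type*} [Group Gp] {r : ℕ} [NeZero r]

lemma gps_singleton_eq_bot (α : Fin r → Gp) (k : Fin r) :
    GplusSub α ({k} : Set (Fin r)) = ⊥ := by
  refine le_antisymm ((Subgroup.closure_le ⊥).mpr ?_) bot_le
  rintro g ⟨i, hi, j, hj, rfl⟩
  simp only [Set.mem_singleton_iff] at hi hj
  subst hi; subst hj
  simp [Subgroup.mem_bot]

lemma compl_singleton_nontrivial (hr : 3 ≤ r) (a : Fin r) :
    (({a}ᶜ : Set (Fin r))).Nontrivial := by
  have hcard : 1 < (Finset.univ.erase a).card := by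
    rw [Finset.card_erase_of_mem (Finset.mem_univ a), Finset.card_univ, Fintype.card_fin]
    omega
  obtain ⟨b, hb, c, hc, hbc⟩ := Finset.one_lt_card.mp hcard
  exact ⟨b, by simpa using (Finset.mem_erase.mp hb).1, c,
    by simpa using (Finset.mem_erase.mp hc).1, hbc⟩

lemma gps_mem (α : Fin r → Gp) (hα0 : α 0 = 1) {K : Set (Fin r)} {j : Fin r}
    (h0 : 0 ∈ K) (hj : j ∈ K) : α j ∈ GplusSub α K :=
  Subgroup.subset_closure ⟨0, h0, j, hj, by rw [hα0, inv_one, one_mul]⟩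

lemma gps_ne_one (hr : 3 ≤ r) (hnt : Nontrivial Gp)
    (α : Fin r → Gp) (hα0 : α 0 = 1)
    (hgen : Subgroup.closure {g : Gp | ∃ i : Fin r, i ≠ 0 ∧ g = α i} = ⊤)
    (hIP : ∀ K J : Set (Fin r), K.Nontrivial → J.Nontrivial →
      GplusSub α K ⊓ GplusSub α J = GplusSub α (K ∩ J))
    {i : Fin r} (hi : i ≠ 0) : α i ≠ 1 := by
  intro hone
  have hall : ∀ j : Fin r, j ≠ 0 → α j = 1 := by
    intro j hj
    by_cases hji : j = i
    · rw [hji]; exact hone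
    · have h1 : α j ∈ GplusSub α ({0, j} : Set (Fin r)) :=
        gps_mem α hα0 (by simp) (by simp)
      have h2 : α j ∈ GplusSub α ({i, j} : Set (Fin r)) :=
        Subgroup.subset_closure ⟨i, by simp, j, by simp, by rw [hone, inv_one, one_mul]⟩
      have hKJ := hIP ({0, j} : Set (Fin r)) ({i, j} : Set (Fin r))
        (Set.nontrivial_pair (Ne.symm hj)) (Set.nontrivial_pair (Ne.symm hji))
      have hinter : ({0, j} : Set (Fin r)) ∩ ({i, j} : Set (Fin r)) = {j} := by
        ext x
        simp only [Set.mem_inter_iff, Set.mem_insert_iff, Set.mem_singleton_iff]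
        constructor
        · rintro ⟨h | h, h' | h'⟩ <;> first
            | assumption
            | (exfalso; subst h; first | exact hi h'.symm | exact hj h' | exact hji h')
        · rintro rfl; exact ⟨Or.inr rfl, Or.inr rfl⟩
      have : α j ∈ GplusSub α ({j} : Set (Fin r)) := by
        rw [← hinter, ← hKJ]; exact ⟨h1, h2⟩
      rw [gps_singleton_eq_bot, Subgroup.mem_bot] at this
      exact this
  have hle : Subgroup.closure {g : Gp | ∃ i : Fin r, i ≠ 0 ∧ g = α i} ≤ ⊥ := by
    apply (Subgroup.closure_le ⊥).mpr
    rintro g ⟨j, hj, rfl⟩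
    simp [Subgroup.mem_bot, hall j hj]
  rw [hgen] at hle
  obtain ⟨x, y, hxy⟩ := hnt
  exact hxy (by
    have hx := hle (Subgroup.mem_top x)
    have hy := hle (Subgroup.mem_top y)
    rw [Subgroup.mem_bot] at hx hy
    rw [hx, hy])

lemma gps_infi_finset (hr : 3 ≤ r) (α : Fin r → Gp)
    (hIP : ∀ K J : Set (Fin r), K.Nontrivial → J.Nontrivial →
      GplusSub α K ⊓ GplusSub α J = GplusSub α (K ∩ J)) :
    ∀ S : Finset (Fin r), S.Nonempty → (∃ k : Fin r, k ∉ S) →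
      (⨅ j ∈ S, GplusSub α ({j}ᶜ : Set (Fin r))) = GplusSub α ((↑S : Set (Fin r))ᶜ) := by
  intro S hS
  induction hS using Finset.Nonempty.cons_induction with
  | singleton a =>
    intro _
    simp
  | cons a S ha hS ih =>
    rintro ⟨k, hk⟩
    have hkS : k ∉ S := fun h => hk (Finset.mem_cons.mpr (Or.inr h))
    have hka : k ≠ a := fun h => hk (by rw [h]; exact Finset.mem_cons_self a S)
    have hScompl : ((↑S : Set (Fin r))ᶜ).Nontrivial :=
      ⟨a, by simpa using ha, k, by simpa using hkS, fun h => hka h.symm⟩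
    have hstep := hIP ({a}ᶜ : Set (Fin r)) ((↑S : Set (Fin r))ᶜ)
      (compl_singleton_nontrivial hr a) hScompl
    rw [Finset.cons_eq_insert, Finset.iInf_insert, ih ⟨k, hkS⟩, hstep]
    congr 1
    ext x
    simp [not_or, and_comm]

end Aux

/-- The generators of a C⁺-group of rank at least 3 are independent, and the
intersection of all but one maximal parabolic subgroups is trivial. -/
theorem stmt_19 {Gp : Type*} [Group Gp] {r : ℕ} [NeZero r] (hr : 3 ≤ r)
    (hnt : Nontrivial Gp)
    (α : Fin r → Gp) (hα0 : α 0 = 1)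
    (hgen : Subgroup.closure {g : Gp | ∃ i : Fin r, i ≠ 0 ∧ g = α i} = ⊤)
    (hIP : ∀ K J : Set (Fin r), K.Nontrivial → J.Nontrivial →
      GplusSub α K ⊓ GplusSub α J = GplusSub α (K ∩ J)) :
    (∀ i : Fin r, i ≠ 0 →
      α i ∉ Subgroup.closure {g : Gp | ∃ j : Fin r, j ≠ 0 ∧ j ≠ i ∧ g = α j}) ∧
    (∀ i : Fin r,
      (⨅ j ∈ ({i}ᶜ : Set (Fin r)), GplusSub α ({j}ᶜ : Set (Fin r))) = ⊥) := by
  constructor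
  · intro i hi hmem
    have h1 : α i ∈ GplusSub α ({0, i} : Set (Fin r)) :=
      gps_mem α hα0 (by simp) (by simp)
    have h2 : α i ∈ GplusSub α (({i}ᶜ : Set (Fin r))) := by
      refine SetLike.le_def.mp ((Subgroup.closure_le _).mpr ?_) hmem
      rintro g ⟨j, hj0, hji, rfl⟩
      exact gps_mem α hα0 (by simp [Ne.symm hi]) (by simp [hji])
    have hKJ := hIP ({0, i} : Set (Fin r)) ({i}ᶜ : Set (Fin r))
      (Set.nontrivial_pair (Ne.symm hi)) (compl_singleton_nontrivial hr i)
    have hinter : ({0, i} : Set (Fin r)) ∩ ({i}ᶜ : Set (Fin r)) = {0} := by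
      ext x
      simp only [Set.mem_inter_iff, Set.mem_insert_iff, Set.mem_singleton_iff,
        Set.mem_compl_iff]
      constructor
      · rintro ⟨h | h, h'⟩
        · exact h
        · exact absurd h h'
      · rintro rfl; exact ⟨Or.inl rfl, Ne.symm hi⟩
    have : α i ∈ GplusSub α ({0} : Set (Fin r)) := by
      rw [← hinter, ← hKJ]; exact ⟨h1, h2⟩
    rw [gps_singleton_eq_bot, Subgroup.mem_bot] at this
    exact gps_ne_one hr hnt α hα0 hgen hIP hi this
  · intro i
    have hSne : (Finset.univ.erase i).Nonempty := by
      have hcard : 0 < (Finset.univ.erase i).card := by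
        rw [Finset.card_erase_of_mem (Finset.mem_univ i), Finset.card_univ, Fintype.card_fin]
        omega
      exact Finset.card_pos.mp hcard
    have hkey := gps_infi_finset hr α hIP (Finset.univ.erase i) hSne
      ⟨i, Finset.notMem_erase i _⟩
    have hconv : ({i}ᶜ : Set (Fin r)) = ↑(Finset.univ.erase i) := by
      ext x; simp
    have hcompl : ((↑(Finset.univ.erase i) : Set (Fin r))ᶜ) = {i} := by
      ext x
      simp
    rw [hconv]
    simp only [Finset.mem_coe]
    rw [hkey, hcompl, gps_singleton_eq_bot]
end
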